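/- Suppose every coupling J_B (B ∈ 𝔅) is independently Gaussian with mean J_{0,B} ∈ ℝ and variance Λ_B² > 0, fix A ∈ 𝔅, and assume the temperature is high enough that 8 β² Λ_A² ≥ 3. Then the quenched average of the fourth power of the correlation function has the nonzero lower bound E[ tanh⁴(β J) ]_{{0, Λ_A²}} ≤ E[ ⟨σ_A⟩_J⁴ ]_{{J_{0,B}, Λ_B²}}. -/

import Mathlib

/-!
Fix every coupling except `J_A`. As `σ_A = ±1`, the Gibbs average is then `tanh (β J_A + c)`,
with `c` depending only on the other couplings, so it suffices to bound the Gaussian mean of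
`tanh (β t + c) ^ 4` over `J_A ~ N(m, v)` from below. The function `F x = tanh (β x) ^ 4` is
increasing in `|x|`, and for such `F` the mean of `F` under `N(m, v)` is smallest at `m = 0`:
tilting `N(0, v)` to `N(m, v)` and symmetrising gives
`E_m F = exp (-m² / 2v) * E_0 [F(X) cosh (m X / v)]`, and since `F` and `cosh (m · / v)` are
similarly ordered, Chebyshev's integral inequality bounds this below by
`E_0 F * exp (-m² / 2v) * E_0 [cosh (m X / v)] = E_0 F`.
-/

open MeasureTheory Real Finset ProbabilityTheory

/-- The spin value of a Boolean: `true ↦ 1`, `false ↦ -1`. -/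
noncomputable def spinVal (b : Bool) : ℝ := if b then 1 else -1

/-- `σ_B = ∏ i ∈ B, σ_i`. -/
noncomputable def sigmaSet {V : Type} (σ : V → Bool) (B : Finset V) : ℝ :=
  ∏ i ∈ B, spinVal (σ i)

/-- The Gibbs (thermal) average `⟨σ_A⟩_J` at inverse temperature `β` for the Hamiltonian
`H(σ) = -∑_{B ∈ ℬ} J_B σ_B`. -/
noncomputable def gibbsAvg {V : Type} [Fintype V] [DecidableEq V] (β : ℝ)
    (ℬ : Finset (Finset V)) (J : ℬ → ℝ) (A : Finset V) : ℝ :=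
  (∑ σ : V → Bool, sigmaSet σ A * Real.exp (β * ∑ B : ℬ, J B * sigmaSet σ (B : Finset V))) /
  (∑ σ : V → Bool, Real.exp (β * ∑ B : ℬ, J B * sigmaSet σ (B : Finset V)))

/-- The product measure of independent Gaussian couplings `J_B ~ N(J_{0,B}, Λ_B²)`. -/
noncomputable def gaussQuenched {V : Type} (ℬ : Finset (Finset V))
    (J0 : Finset V → ℝ) (Λ : Finset V → NNReal) : Measure (ℬ → ℝ) :=
  Measure.pi fun B => gaussianReal (J0 (B : Finset V)) (Λ (B : Finset V) ^ 2)

open scoped NNReal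

theorem integral_mul_integral_le_integral_mul_of_monovary {α : Type*} [MeasurableSpace α]
    {μ : Measure α} [IsProbabilityMeasure μ] {f g : α → ℝ} (hfg : Monovary f g)
    (hf : Integrable f μ) (hg : Integrable g μ) (hfg_int : Integrable (fun x => f x * g x) μ) :
    (∫ x, f x ∂μ) * (∫ x, g x ∂μ) ≤ ∫ x, f x * g x ∂μ := by
  have h₁ : Integrable (fun z : α × α => f z.1 * g z.1) (μ.prod μ) :=
    hfg_int.comp_fst μ
  have h₂ : Integrable (fun z : α × α => f z.2 * g z.2) (μ.prod μ) :=
    hfg_int.comp_snd μ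
  have h₃ : Integrable (fun z : α × α => f z.1 * g z.2) (μ.prod μ) := hf.mul_prod hg
  have h₄ : Integrable (fun z : α × α => f z.2 * g z.1) (μ.prod μ) :=
    (hg.mul_prod hf).congr (ae_of_all _ fun z => mul_comm _ _)
  have hsymm : 0 ≤ ∫ z, (f z.2 - f z.1) * (g z.2 - g z.1) ∂μ.prod μ :=
    integral_nonneg fun z => hfg.sub_mul_sub_nonneg z.1 z.2
  have h₂₄ : Integrable (fun z : α × α => f z.2 * g z.2 - f z.2 * g z.1) (μ.prod μ) :=
    h₂.sub h₄
  have h₃₁ : Integrable (fun z : α × α => f z.1 * g z.2 - f z.1 * g z.1) (μ.prod μ) :=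
    h₃.sub h₁
  have e₄ : ∫ z, f z.2 * g z.1 ∂μ.prod μ = (∫ x, f x ∂μ) * ∫ x, g x ∂μ := by
    simp_rw [mul_comm (f _)]
    rw [integral_prod_mul g f, mul_comm]
  have hexpand : ∫ z, (f z.2 - f z.1) * (g z.2 - g z.1) ∂μ.prod μ
      = 2 * ∫ x, f x * g x ∂μ - 2 * ((∫ x, f x ∂μ) * ∫ x, g x ∂μ) := by
    simp_rw [sub_mul, mul_sub]
    rw [integral_sub h₂₄ h₃₁, integral_sub h₂ h₄, integral_sub h₃ h₁,
      integral_fun_snd (fun x => f x * g x), integral_fun_fst (fun x => f x * g x),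
      integral_prod_mul f g, e₄]
    simp only [probReal_univ, one_smul]
    ring
  linarith

theorem le_integral_pi_of_le_integral_update {ι : Type*} [Fintype ι] [DecidableEq ι]
    {X : ι → Type*} [∀ i, MeasurableSpace (X i)] {μ : ∀ i, Measure (X i)}
    [∀ i, IsProbabilityMeasure (μ i)] {f : (∀ i, X i) → ℝ} (hf : Measurable f)
    (hf_nonneg : 0 ≤ f) (hf_int : Integrable f (Measure.pi μ)) (i : ι) {c : ℝ}
    (hc : ∀ x, c ≤ ∫ t, f (Function.update x i t) ∂μ i) :
    c ≤ ∫ x, f x ∂Measure.pi μ := by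
  have hsection (x : ∀ i, X i) :
      ENNReal.ofReal c ≤ ∫⁻ t, ENNReal.ofReal (f (Function.update x i t)) ∂μ i :=
    calc
      ENNReal.ofReal c ≤ ‖∫ t, f (Function.update x i t) ∂μ i‖ₑ :=
        (ENNReal.ofReal_le_ofReal (hc x)).trans (Real.ofReal_le_enorm _)
      _ ≤ ∫⁻ t, ‖f (Function.update x i t)‖ₑ ∂μ i := enorm_integral_le_lintegral_enorm _
      _ = _ := lintegral_enorm_of_nonneg fun t => hf_nonneg _
  have hlintegral : ENNReal.ofReal c ≤ ∫⁻ x, ENNReal.ofReal (f x) ∂Measure.pi μ := by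
    calc ENNReal.ofReal c = ∫⁻ _, ENNReal.ofReal c ∂Measure.pi μ := by simp
      _ ≤ _ := lintegral_le_of_lmarginal_le {i} measurable_const hf.ennreal_ofReal fun x => by
        simpa [lmarginal_singleton] using hsection x
  rwa [← ofReal_integral_eq_lintegral_ofReal hf_int (ae_of_all _ hf_nonneg),
    ENNReal.ofReal_le_ofReal_iff (integral_nonneg hf_nonneg)] at hlintegral

theorem Real.measurable_tanh : Measurable tanh := by
  rw [show tanh = sinh / cosh from funext tanh_eq_sinh_div_cosh]
  exact measurable_sinh.div measurable_cosh

theorem Real.tanh_sq (x : ℝ) : tanh x ^ 2 = 1 - (cosh x ^ 2)⁻¹ := by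
  rw [tanh_eq_sinh_div_cosh, div_pow, cosh_sq']
  field_simp
  ring

theorem Real.tanh_pow_four_le_of_abs_le {x y : ℝ} (h : |x| ≤ |y|) : tanh x ^ 4 ≤ tanh y ^ 4 := by
  have hsq : tanh x ^ 2 ≤ tanh y ^ 2 := by
    rw [tanh_sq, tanh_sq]
    gcongr
    exact cosh_le_cosh.2 h
  simpa only [← pow_mul] using pow_le_pow_left₀ (sq_nonneg _) hsq 2

theorem Real.tanh_add_half_log_div {a b : ℝ} (ha : 0 < a) (hb : 0 < b) (x : ℝ) :
    tanh (x + log (a / b) / 2) = (exp x * a - exp (-x) * b) / (exp x * a + exp (-x) * b) := by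
  set q := exp (log (a / b) / 2) with hq
  have hq_pos : 0 < q := exp_pos _
  have hq_sq : q ^ 2 * b = a := by
    rw [hq, ← exp_nat_mul, Nat.cast_ofNat, mul_div_cancel₀ _ two_ne_zero,
      exp_log (div_pos ha hb), div_mul_cancel₀ _ hb.ne']
  rw [tanh_eq, neg_add, exp_add, exp_add, exp_neg (log _ / 2), ← hq, ← hq_sq]
  have := exp_pos x
  have := exp_pos (-x)
  field_simp

theorem exists_forall_sum_mul_exp_div_sum_exp_eq_tanh {ι : Type*} (s : Finset ι) {ε w : ι → ℝ}
    (hε : ∀ i, ε i = 1 ∨ ε i = -1) (hw : ∀ i, 0 < w i) (h_one : ∃ i ∈ s, ε i = 1)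
    (h_neg_one : ∃ i ∈ s, ε i = -1) :
    ∃ c, ∀ x, (∑ i ∈ s, ε i * (exp (x * ε i) * w i)) / (∑ i ∈ s, exp (x * ε i) * w i)
      = tanh (x + c) := by
  set P := ∑ i ∈ s, (1 + ε i) / 2 * w i
  set M := ∑ i ∈ s, (1 - ε i) / 2 * w i
  have hP : 0 < P := by
    obtain ⟨j, hj, hεj⟩ := h_one
    refine sum_pos' (fun i _ => ?_) ⟨j, hj, by simp [hεj, hw j]⟩
    rcases hε i with h | h <;> simp [h, (hw i).le]
  have hM : 0 < M := by
    obtain ⟨j, hj, hεj⟩ := h_neg_one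
    refine sum_pos' (fun i _ => ?_) ⟨j, hj, by norm_num [hεj, hw j]⟩
    rcases hε i with h | h <;> norm_num [h, (hw i).le]
  refine ⟨log (P / M) / 2, fun x => ?_⟩
  have hnum : ∑ i ∈ s, ε i * (exp (x * ε i) * w i) = exp x * P - exp (-x) * M := by
    rw [mul_sum, mul_sum, ← sum_sub_distrib]
    refine sum_congr rfl fun i _ => ?_
    rcases hε i with h | h <;> simp [h]
  have hden : ∑ i ∈ s, exp (x * ε i) * w i = exp x * P + exp (-x) * M := by
    rw [mul_sum, mul_sum, ← sum_add_distrib]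
    refine sum_congr rfl fun i _ => ?_
    rcases hε i with h | h <;> simp [h]
  rw [hnum, hden, tanh_add_half_log_div hP hM]

section Gaussian

variable {v : ℝ≥0}

instance : (gaussianReal 0 v).IsNegInvariant :=
  ⟨(gaussianReal_map_neg (μ := 0) (v := v)).trans (by rw [neg_zero])⟩

theorem integrable_cosh_mul_gaussianReal (m a : ℝ) :
    Integrable (fun x => cosh (a * x)) (gaussianReal m v) := by
  simp_rw [cosh_eq, ← neg_mul]
  exact ((integrable_exp_mul_gaussianReal a).add
    (integrable_exp_mul_gaussianReal (-a))).div_const 2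

theorem gaussianPDFReal_eq_exp_mul_gaussianPDFReal_zero (m x : ℝ) :
    gaussianPDFReal m v x = exp (m / v * x - m ^ 2 / (2 * v)) * gaussianPDFReal 0 v x := by
  simp only [gaussianPDFReal, mul_left_comm _ (√(2 * π * v))⁻¹, ← exp_add]
  ring_nf

theorem integral_gaussianReal_eq_integral_mul_exp (hv : v ≠ 0) (m : ℝ) (F : ℝ → ℝ) :
    ∫ x, F x ∂gaussianReal m v
      = ∫ x, F x * exp (m / v * x - m ^ 2 / (2 * v)) ∂gaussianReal 0 v := by
  simp_rw [integral_gaussianReal_eq_integral_smul hv,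
    gaussianPDFReal_eq_exp_mul_gaussianPDFReal_zero m, smul_eq_mul]
  congr with x
  ring

theorem integral_gaussianReal_eq_exp_mul_integral_mul_cosh {G : ℝ → ℝ} (hG : Measurable G)
    {C : ℝ} (hG_bdd : ∀ x, ‖G x‖ ≤ C) (hG_even : ∀ x, G (-x) = G x) (hv : v ≠ 0) (m : ℝ) :
    ∫ x, G x ∂gaussianReal m v
      = exp (-m ^ 2 / (2 * v)) * ∫ x, G x * cosh (m / v * x) ∂gaussianReal 0 v := by
  set a := m / v
  have hint (b : ℝ) : Integrable (fun x => G x * exp (b * x)) (gaussianReal 0 v) :=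
    (integrable_exp_mul_gaussianReal b).bdd_mul hG.aestronglyMeasurable (ae_of_all _ hG_bdd)
  have hreflect : ∫ x, G x * exp (-(a * x)) ∂gaussianReal 0 v
      = ∫ x, G x * exp (a * x) ∂gaussianReal 0 v := by
    simpa [hG_even] using integral_neg_eq_self (fun x => G x * exp (a * x)) (gaussianReal 0 v)
  have hsymm : ∫ x, G x * cosh (a * x) ∂gaussianReal 0 v
      = ∫ x, G x * exp (a * x) ∂gaussianReal 0 v := by
    simp_rw [cosh_eq, mul_div_assoc', mul_add, integral_div]
    rw [integral_add (hint a) (by simpa using hint (-a)), hreflect]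
    ring
  simp_rw [integral_gaussianReal_eq_integral_mul_exp hv m, sub_eq_add_neg, exp_add,
    ← mul_assoc, integral_mul_const, hsymm, neg_div]
  ring

theorem integral_gaussianReal_zero_le_integral_gaussianReal {F : ℝ → ℝ} (hF : Measurable F)
    (hF_mono : ∀ x y, |x| ≤ |y| → F x ≤ F y) {C : ℝ} (hF_bdd : ∀ x, ‖F x‖ ≤ C)
    (hv : v ≠ 0) (m : ℝ) :
    ∫ x, F x ∂gaussianReal 0 v ≤ ∫ x, F x ∂gaussianReal m v := by
  set a := m / v
  have hF_even (x : ℝ) : F (-x) = F x :=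
    le_antisymm (hF_mono _ _ (abs_neg x).le) (hF_mono _ _ (abs_neg x).ge)
  have hone : exp (-m ^ 2 / (2 * v)) * ∫ x, cosh (a * x) ∂gaussianReal 0 v = 1 := by
    simpa using (integral_gaussianReal_eq_exp_mul_integral_mul_cosh (G := fun _ => (1 : ℝ))
      measurable_const (fun _ => le_of_eq (norm_one (α := ℝ))) (fun _ => rfl) hv m).symm
  have hmonovary : Monovary F fun x => cosh (a * x) := fun x y hxy => by
    rw [cosh_lt_cosh, abs_mul, abs_mul] at hxy
    exact hF_mono x y (lt_of_mul_lt_mul_left hxy (abs_nonneg a)).le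
  have hF_int : Integrable F (gaussianReal 0 v) :=
    .of_bound hF.aestronglyMeasurable C (ae_of_all _ hF_bdd)
  have hcosh_int := integrable_cosh_mul_gaussianReal (v := v) 0 a
  have hchebyshev := integral_mul_integral_le_integral_mul_of_monovary hmonovary hF_int
    hcosh_int (hcosh_int.bdd_mul hF.aestronglyMeasurable (ae_of_all _ hF_bdd))
  calc ∫ x, F x ∂gaussianReal 0 v
      = exp (-m ^ 2 / (2 * v))
          * ((∫ x, F x ∂gaussianReal 0 v) * ∫ x, cosh (a * x) ∂gaussianReal 0 v) := by
        rw [mul_left_comm, hone, mul_one]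
    _ ≤ exp (-m ^ 2 / (2 * v)) * ∫ x, F x * cosh (a * x) ∂gaussianReal 0 v := by gcongr
    _ = ∫ x, F x ∂gaussianReal m v :=
        (integral_gaussianReal_eq_exp_mul_integral_mul_cosh hF hF_bdd hF_even hv m).symm

end Gaussian

theorem integral_tanh_pow_four_le {β : ℝ} (hβ : β ≠ 0) {v : ℝ≥0} (hv : v ≠ 0) (m d : ℝ) :
    ∫ x, tanh (β * x) ^ 4 ∂gaussianReal 0 v ≤ ∫ t, tanh (β * t + d) ^ 4 ∂gaussianReal m v := by
  have hmeas : Measurable fun x => tanh (β * x) ^ 4 :=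
    (Real.measurable_tanh.comp (measurable_const_mul β)).pow_const 4
  have hshift : ∫ t, tanh (β * t + d) ^ 4 ∂gaussianReal m v
      = ∫ x, tanh (β * x) ^ 4 ∂gaussianReal (m + d / β) v := by
    rw [← gaussianReal_map_add_const, integral_map (measurable_add_const _).aemeasurable
      hmeas.aestronglyMeasurable]
    congr with t
    field_simp
  rw [hshift]
  refine integral_gaussianReal_zero_le_integral_gaussianReal hmeas (fun x y hxy => ?_) (C := 1)
    (fun x => ?_) hv _
  · exact tanh_pow_four_le_of_abs_le (by rw [abs_mul, abs_mul]; gcongr)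
  · simpa [abs_pow] using pow_le_one₀ (abs_nonneg _) (abs_tanh_lt_one (β * x)).le

section Gibbs

variable {V : Type}

theorem spinVal_eq_one_or_neg_one (b : Bool) : spinVal b = 1 ∨ spinVal b = -1 := by
  cases b <;> simp [spinVal]

theorem sigmaSet_eq_one_or_neg_one (σ : V → Bool) (B : Finset V) :
    sigmaSet σ B = 1 ∨ sigmaSet σ B = -1 :=
  prod_induction _ (fun s : ℝ => s = 1 ∨ s = -1)
    (by rintro _ _ (rfl | rfl) (rfl | rfl) <;> norm_num) (.inl rfl)
    fun i _ => spinVal_eq_one_or_neg_one _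

theorem sigmaSet_const_true (B : Finset V) : sigmaSet (fun _ => true) B = 1 := by
  simp [sigmaSet, spinVal]

theorem exists_sigmaSet_eq_neg_one [DecidableEq V] {B : Finset V} (hB : B.Nonempty) :
    ∃ σ : V → Bool, sigmaSet σ B = -1 := by
  obtain ⟨i, hi⟩ := hB
  refine ⟨fun j => decide (j ≠ i), ?_⟩
  rw [sigmaSet, prod_eq_single i (fun j _ hj => by simp [spinVal, hj]) (absurd hi)]
  simp [spinVal]

variable [Fintype V] [DecidableEq V]

theorem measurable_gibbsAvg (β : ℝ) (ℬ : Finset (Finset V)) (A : Finset V) :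
    Measurable fun J => gibbsAvg β ℬ J A := by
  unfold gibbsAvg
  fun_prop

theorem exists_gibbsAvg_update_eq_tanh (β : ℝ) (ℬ : Finset (Finset V)) {A : Finset V}
    (hA : A ∈ ℬ) (hA_ne : A.Nonempty) (J : ℬ → ℝ) :
    ∃ c, ∀ t, gibbsAvg β ℬ (Function.update J ⟨A, hA⟩ t) A = tanh (β * t + c) := by
  set a : ℬ := ⟨A, hA⟩
  have hsplit (t : ℝ) (σ : V → Bool) :
      β * ∑ B : ℬ, Function.update J a t B * sigmaSet σ B
        = β * t * sigmaSet σ A + β * ∑ B ∈ univ.erase a, J B * sigmaSet σ B := by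
    rw [← add_sum_erase _ _ (mem_univ a), Function.update_self, mul_add, mul_assoc]
    congr 2
    exact sum_congr rfl fun B hB => by rw [Function.update_of_ne (ne_of_mem_erase hB)]
  obtain ⟨σ', hσ'⟩ := exists_sigmaSet_eq_neg_one hA_ne
  obtain ⟨c, hc⟩ := exists_forall_sum_mul_exp_div_sum_exp_eq_tanh univ
    (ε := fun σ : V → Bool => sigmaSet σ A)
    (w := fun σ => exp (β * ∑ B ∈ univ.erase a, J B * sigmaSet σ B))
    (fun σ => sigmaSet_eq_one_or_neg_one σ A) (fun σ => exp_pos _)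
    ⟨_, mem_univ _, sigmaSet_const_true A⟩ ⟨σ', mem_univ _, hσ'⟩
  refine ⟨c, fun t => ?_⟩
  simp only [gibbsAvg, hsplit, exp_add]
  exact hc (β * t)

theorem abs_gibbsAvg_le_one (β : ℝ) (ℬ : Finset (Finset V)) {A : Finset V} (hA : A ∈ ℬ)
    (hA_ne : A.Nonempty) (J : ℬ → ℝ) : |gibbsAvg β ℬ J A| ≤ 1 := by
  obtain ⟨c, hc⟩ := exists_gibbsAvg_update_eq_tanh β ℬ hA hA_ne J
  have h := hc (J ⟨A, hA⟩)
  rw [Function.update_eq_self] at h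
  exact h ▸ (abs_tanh_lt_one _).le

end Gibbs

theorem gaussian_correlation_fourth_lower_bound_high_temp_general
    {V : Type} [Fintype V] [DecidableEq V]
    (ℬ : Finset (Finset V)) (hℬ : ∀ B ∈ ℬ, B.Nonempty)
    (β : ℝ) (hβ : 0 < β)
    (J0 : Finset V → ℝ) (Λ : Finset V → NNReal) (hΛ : ∀ B, 0 < Λ B)
    (A : Finset V) (hA : A ∈ ℬ) :
    ∫ x, Real.tanh (β * x) ^ 4 ∂(gaussianReal 0 (Λ A ^ 2))
      ≤ ∫ J, gibbsAvg β ℬ J A ^ 4 ∂(gaussQuenched ℬ J0 Λ) := by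
  have hmeas : Measurable fun J => gibbsAvg β ℬ J A ^ 4 :=
    (measurable_gibbsAvg β ℬ A).pow_const 4
  have hbound (J : ℬ → ℝ) : ‖gibbsAvg β ℬ J A ^ 4‖ ≤ 1 := by
    rw [norm_pow, Real.norm_eq_abs]
    exact pow_le_one₀ (abs_nonneg _) (abs_gibbsAvg_le_one β ℬ hA (hℬ A hA) J)
  refine le_integral_pi_of_le_integral_update hmeas (fun J => by positivity)
    (.of_bound hmeas.aestronglyMeasurable 1 (ae_of_all _ hbound)) ⟨A, hA⟩ fun J => ?_
  obtain ⟨c, hc⟩ := exists_gibbsAvg_update_eq_tanh β ℬ hA (hℬ A hA) J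
  simpa only [hc] using integral_tanh_pow_four_le hβ.ne' (pow_ne_zero 2 (hΛ A).ne') (J0 A) c

/-- For independent Gaussian couplings `J_B ~ N(J_{0,B}, Λ_B²)` at sufficiently high
temperature, `8β²Λ_A² ≥ 3`, the quenched average of the fourth power of the correlation
function has the nonzero lower bound `E[tanh⁴(βJ)]_{N(0, Λ_A²)} ≤ E[⟨σ_A⟩_J⁴]`. -/
theorem gaussian_correlation_fourth_lower_bound_high_temp
    {V : Type} [Fintype V] [DecidableEq V]
    (ℬ : Finset (Finset V)) (hℬ : ∀ B ∈ ℬ, B.Nonempty)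
    (β : ℝ) (hβ : 0 < β)
    (J0 : Finset V → ℝ) (Λ : Finset V → NNReal) (hΛ : ∀ B, 0 < Λ B)
    (A : Finset V) (hA : A ∈ ℬ)
    (htemp : 8 * β ^ 2 * (Λ A : ℝ) ^ 2 ≥ 3) :
    ∫ x, Real.tanh (β * x) ^ 4 ∂(gaussianReal 0 (Λ A ^ 2))
      ≤ ∫ J, gibbsAvg β ℬ J A ^ 4 ∂(gaussQuenched ℬ J0 Λ) :=
  gaussian_correlation_fourth_lower_bound_high_temp_general ℬ hℬ β hβ J0 Λ hΛ A hA
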